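/- arXiv:0804.4383 — 6 statements merged into one kernel-verified Lean document; each statement's English description precedes it below -/
import Mathlib

section
/- If a behavior b : ℝ≥0 → Σ is non-Berkeley for some δ > 0 (i.e., every time instant t lies in some closed interval [u, u+δ] on which b is constant), then b is non-Zeno (i.e., the set of discontinuity points of b has no accumulation point in ℝ≥0). -/
open Filter

/-- `b` is constant on the set `I`. -/
def ConstOn {S : Type*} (b : ℝ → S) (I : Set ℝ) : Prop :=
  ∀ x ∈ I, ∀ y ∈ I, b x = b y

/-- Non-Berkeleyness for `δ`: every nonnegative instant lies in a closed
interval of length `δ` (with nonnegative left endpoint) on which `b` is constant. -/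
def NonBerkeley {S : Type*} (b : ℝ → S) (δ : ℝ) : Prop :=
  ∀ t : ℝ, 0 ≤ t → ∃ u : ℝ, 0 ≤ u ∧ t ∈ Set.Icc u (u + δ) ∧ ConstOn b (Set.Icc u (u + δ))

/-- `t` is a transition (discontinuity) point of `b`: `b` is not constant on any
neighborhood of `t` (within the nonnegative reals). -/
def IsTransition {S : Type*} (b : ℝ → S) (t : ℝ) : Prop :=
  ∀ ε > (0 : ℝ), ∃ x ∈ Set.Ioo (t - ε) (t + ε), ∃ y ∈ Set.Ioo (t - ε) (t + ε),
    0 ≤ x ∧ 0 ≤ y ∧ b x ≠ b y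

/-- A point interior to an interval of constancy is not a transition point. -/
lemma not_transition_of_interior {S : Type*} (b : ℝ → S) {u v s : ℝ}
    (hc : ConstOn b (Set.Icc u v)) (hs : s ∈ Set.Ioo u v) : ¬ IsTransition b s := by
  intro hT
  obtain ⟨x, hx, y, hy, _, _, hxy⟩ := hT (min (s - u) (v - s))
    (lt_min (by linarith [hs.1]) (by linarith [hs.2]))
  apply hxy
  have hxm : x ∈ Set.Icc u v := by
    constructor
    · have := hx.1; have : s - min (s - u) (v - s) ≥ u := by
        have := min_le_left (s - u) (v - s); linarith
      linarith [hx.1]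
    · have := min_le_right (s - u) (v - s); linarith [hx.2]
  have hym : y ∈ Set.Icc u v := by
    constructor
    · have := min_le_left (s - u) (v - s); linarith [hy.1]
    · have := min_le_right (s - u) (v - s); linarith [hy.2]
  exact hc x hxm y hym

/-- Transition points are `δ`-separated for a non-Berkeley behavior. -/
lemma transitions_separated {S : Type*} (b : ℝ → S) {δ : ℝ} (hδ : 0 < δ)
    (hB : NonBerkeley b δ) {s s' : ℝ} (hs0 : 0 < s) (hs'0 : 0 < s')
    (hT : IsTransition b s) (hT' : IsTransition b s') (hne : s ≠ s') :
    δ ≤ |s - s'| := by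
  wlog h : s < s' generalizing s s'
  · have := this hs'0 hs0 hT' hT (Ne.symm hne) (lt_of_le_of_ne (not_lt.mp h) (Ne.symm hne))
    rwa [abs_sub_comm]
  by_contra hlt
  push_neg at hlt
  rw [abs_sub_lt_iff] at hlt
  have hss' : s' - s < δ := by linarith [hlt.2]
  obtain ⟨u, hu0, htm, hc⟩ := hB ((s + s') / 2) (by linarith)
  by_cases hu : u < s
  · exact not_transition_of_interior b hc ⟨hu, by linarith [htm.2]⟩ hT
  · push_neg at hu
    exact not_transition_of_interior b hc ⟨by linarith [htm.1], by linarith⟩ hT'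

/-- A non-Berkeley behavior is non-Zeno: the set of its transition points
has no accumulation point in `ℝ≥0`. -/
theorem nonBerkeley_imp_nonZeno {S : Type*} [Finite S] (b : ℝ → S) (δ : ℝ) (hδ : 0 < δ)
    (hB : NonBerkeley b δ) :
    ∀ t : ℝ, 0 ≤ t → ¬ AccPt t (𝓟 {s : ℝ | 0 < s ∧ IsTransition b s}) := by
  intro t _ h
  rw [accPt_iff_nhds] at h
  obtain ⟨s₁, ⟨hs₁b, hs₁0, hs₁T⟩, hs₁t⟩ :=
    h (Metric.ball t (δ / 2)) (Metric.ball_mem_nhds t (by linarith))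
  obtain ⟨s₂, ⟨hs₂b, hs₂0, hs₂T⟩, hs₂t⟩ :=
    h (Metric.ball t (|s₁ - t|)) (Metric.ball_mem_nhds t (abs_pos.mpr (sub_ne_zero.mpr hs₁t)))
  rw [Metric.mem_ball, Real.dist_eq] at hs₁b hs₂b
  have hne : s₂ ≠ s₁ := fun e => by rw [e] at hs₂b; exact lt_irrefl _ hs₂b
  have hsep := transitions_separated b hδ hB hs₁0 hs₂0 hs₁T hs₂T (Ne.symm hne)
  have : |s₁ - s₂| < δ := by
    calc |s₁ - s₂| ≤ |s₁ - t| + |t - s₂| := abs_sub_le _ _ _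
    _ < δ / 2 + δ / 2 := by rw [abs_sub_comm t s₂]; linarith
    _ = δ := by ring
  linarith
end

section
/- Over dense time ℝ≥0, for a behavior b non-Berkeley for δ, if the 'becomes' formula ⌈β₁⌉ ↝ ⌈β₂⌉ holds at t (i.e., β₁ holds throughout (t-ε, t) for some ε > 0, and either β₂ holds at t or β₂ holds throughout (t, t+ε') for some ε' > 0) and β₁, β₂ are mutually exclusive state predicates, then β₁ holds throughout [t-δ, t) and β₂ holds throughout (t, t+δ]. -/
/-- `β` holds throughout `(t-ε, t)` for some `ε > 0`. -/
def UpToNowStrict {S : Type*} (b : ℝ → S) (β : S → Prop) (t : ℝ) : Prop :=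
  ∃ ε > (0 : ℝ), ∀ x ∈ Set.Ioo (t - ε) t, β (b x)

/-- `β` holds throughout `(t, t+ε)` for some `ε > 0`. -/
def NowOnStrict {S : Type*} (b : ℝ → S) (β : S → Prop) (t : ℝ) : Prop :=
  ∃ ε > (0 : ℝ), ∀ x ∈ Set.Ioo t (t + ε), β (b x)

/-- The `becomes` operator: a switch from condition `β₁` to condition `β₂` at `t`. -/
def Becomes {S : Type*} (b : ℝ → S) (β₁ β₂ : S → Prop) (t : ℝ) : Prop :=
  UpToNowStrict b β₁ t ∧ (β₂ (b t) ∨ NowOnStrict b β₂ t)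

/-- If `becomes(β₁,β₂)` holds at `t` for mutually exclusive `β₁, β₂` and a behavior
non-Berkeley for `δ`, then `β₁` holds throughout `[t-δ, t)` (within the time domain)
and `β₂` holds throughout `(t, t+δ]`. -/
theorem becomes_const_around {S : Type*} [Finite S] (b : ℝ → S) (δ : ℝ) (hδ : 0 < δ)
    (hB : NonBerkeley b δ) (β₁ β₂ : S → Prop) (hexcl : ∀ s : S, ¬ (β₁ s ∧ β₂ s))
    (t : ℝ) (ht : 0 ≤ t) (hbec : Becomes b β₁ β₂ t) :
    (∀ x ∈ Set.Ico (t - δ) t, 0 ≤ x → β₁ (b x)) ∧ (∀ x ∈ Set.Ioc t (t + δ), β₂ (b x)) := by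
  obtain ⟨⟨ε₁, hε₁, hβ₁⟩, hright⟩ := hbec
  obtain ⟨u, hu0, ⟨hu1, hu2⟩, hconst⟩ := hB t ht
  rcases lt_or_eq_of_le hu1 with hut | hut
  · -- u < t : the constancy interval around t sticks out to the left
    set y := (max u (t - ε₁) + t) / 2 with hy
    have hmy : max u (t - ε₁) < t := max_lt hut (by linarith)
    have hyu : u ≤ y := by
      have := le_max_left u (t - ε₁); simp only [hy]; linarith
    have hyε : t - ε₁ < y := by
      have := le_max_right u (t - ε₁); simp only [hy]; linarith
    have hyt : y < t := by simp only [hy]; linarith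
    have hy2 : y ≤ u + δ := by linarith
    have hβ₁y : β₁ (b y) := hβ₁ y ⟨hyε, hyt⟩
    have hbt : b t = b y := hconst t ⟨hu1, hu2⟩ y ⟨hyu, hy2⟩
    have hβ₁t : β₁ (b t) := hbt ▸ hβ₁y
    rcases hright with h2t | ⟨ε₂, hε₂, hβ₂⟩
    · exact absurd ⟨hβ₁t, h2t⟩ (hexcl _)
    have hud : u + δ ≤ t := by
      by_contra h
      push_neg at h
      set z := (t + min (t + ε₂) (u + δ)) / 2 with hz
      have hmz : t < min (t + ε₂) (u + δ) := lt_min (by linarith) h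
      have hz1 : t < z := by simp only [hz]; linarith
      have hz2 : z < t + ε₂ := by
        have := min_le_left (t + ε₂) (u + δ); simp only [hz]; linarith
      have hz3 : z ≤ u + δ := by
        have := min_le_right (t + ε₂) (u + δ); simp only [hz]; linarith
      have hβ₂z : β₂ (b z) := hβ₂ z ⟨hz1, hz2⟩
      have : b z = b y := hconst z ⟨by linarith, hz3⟩ y ⟨hyu, hy2⟩
      exact hexcl (b z) ⟨this ▸ hβ₁y, hβ₂z⟩
    have hueq : u + δ = t := le_antisymm hud hu2
    constructor
    · intro x hx _
      have hx1 : u ≤ x := by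
        have := hx.1; linarith
      have hx2 : x ≤ u + δ := by
        have := hx.2; linarith
      have : b x = b y := hconst x ⟨hx1, hx2⟩ y ⟨hyu, hy2⟩
      exact this ▸ hβ₁y
    · intro x hx
      obtain ⟨hxt, hxd⟩ := hx
      set z := (t + min (t + ε₂) x) / 2 with hz
      have hmz : t < min (t + ε₂) x := lt_min (by linarith) hxt
      have hz1 : t < z := by simp only [hz]; linarith
      have hz2 : z < t + ε₂ := by
        have := min_le_left (t + ε₂) x; simp only [hz]; linarith
      have hz3 : z < x := by
        have := min_le_right (t + ε₂) x; simp only [hz]; linarith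
      have hβ₂z : β₂ (b z) := hβ₂ z ⟨hz1, hz2⟩
      obtain ⟨w, hw0, ⟨hw1, hw2⟩, hc2⟩ := hB z (by linarith)
      have hwt : t < w := by
        by_contra h
        push_neg at h
        have : b t = b z := hc2 t ⟨h, by linarith⟩ z ⟨hw1, hw2⟩
        exact hexcl (b t) ⟨hβ₁t, this ▸ hβ₂z⟩
      have : b x = b z := hc2 x ⟨by linarith, by linarith⟩ z ⟨hw1, hw2⟩
      exact this ▸ hβ₂z
  · -- u = t : the constancy interval around t is [t, t+δ]
    subst hut
    have h2t : β₂ (b u) := by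
      rcases hright with h | ⟨ε₂, hε₂, hβ₂⟩
      · exact h
      · set z := (u + min (u + ε₂) (u + δ)) / 2 with hz
        have hmz : u < min (u + ε₂) (u + δ) := lt_min (by linarith) (by linarith)
        have hz1 : u < z := by simp only [hz]; linarith
        have hz2 : z < u + ε₂ := by
          have := min_le_left (u + ε₂) (u + δ); simp only [hz]; linarith
        have hz3 : z ≤ u + δ := by
          have := min_le_right (u + ε₂) (u + δ); simp only [hz]; linarith
        have hβ₂z : β₂ (b z) := hβ₂ z ⟨hz1, hz2⟩
        have : b u = b z := hconst u ⟨le_refl u, by linarith⟩ z ⟨by linarith, hz3⟩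
        exact this ▸ hβ₂z
    constructor
    · intro x hx hx0
      obtain ⟨hx1, hx2⟩ := hx
      set y := (max x (u - ε₁) + u) / 2 with hy
      have hmy : max x (u - ε₁) < u := max_lt hx2 (by linarith)
      have hyx : x < y := by
        have := le_max_left x (u - ε₁); simp only [hy]; linarith
      have hyε : u - ε₁ < y := by
        have := le_max_right x (u - ε₁); simp only [hy]; linarith
      have hyt : y < u := by simp only [hy]; linarith
      have hβ₁y : β₁ (b y) := hβ₁ y ⟨hyε, hyt⟩
      obtain ⟨w, hw0, ⟨hw1, hw2⟩, hc2⟩ := hB y (by linarith)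
      have hwd : w + δ < u := by
        by_contra h
        push_neg at h
        have : b u = b y := hc2 u ⟨by linarith, h⟩ y ⟨hw1, hw2⟩
        exact hexcl (b u) ⟨this ▸ hβ₁y, h2t⟩
      have : b x = b y := hc2 x ⟨by linarith, by linarith⟩ y ⟨hw1, hw2⟩
      exact this ▸ hβ₁y
    · intro x hx
      obtain ⟨hx1, hx2⟩ := hx
      have : b x = b u := hconst x ⟨by linarith, hx2⟩ u ⟨le_refl u, by linarith⟩
      exact this ▸ h2t
end

section
/- Over dense time ℝ≥0, for a non-Berkeley behavior b (for δ) and mutually exclusive predicates β₁, β₂: if β₁(b(t)) and β₂(b(t+δ)) hold for some t, then there exists a transition instant t'' ∈ [t, t+δ] at which becomes(β₁, β₂) holds. -/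
/-- If `β₁` holds at `t` and `β₂` at `t+δ` (mutually exclusive predicates, non-Berkeley
behavior for `δ`), then there is a transition instant `t'' ∈ [t, t+δ]` at which
`becomes(β₁, β₂)` holds. -/
theorem sampled_becomes {S : Type*} [Finite S] (b : ℝ → S) (δ : ℝ) (hδ : 0 < δ)
    (hB : NonBerkeley b δ) (β₁ β₂ : S → Prop) (hexcl : ∀ s : S, ¬ (β₁ s ∧ β₂ s))
    (t : ℝ) (ht : 0 ≤ t) (h1 : β₁ (b t)) (h2 : β₂ (b (t + δ))) :
    ∃ t'' ∈ Set.Icc t (t + δ), IsTransition b t'' ∧ Becomes b β₁ β₂ t'' := by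

  obtain ⟨u, hu0, ⟨hut, htu⟩, hcu⟩ := hB t ht
  obtain ⟨v, hv0, ⟨hvt, htv⟩, hcv⟩ := hB (t + δ) (by linarith)
  have hne : b t ≠ b (t + δ) := fun h => hexcl (b t) ⟨h1, by rw [h]; exact h2⟩
  have huv : u + δ < v := by
    by_contra h
    push_neg at h
    have hmem1 : max u v ∈ Set.Icc u (u + δ) :=
      ⟨le_max_left _ _, max_le (by linarith) h⟩
    have hmem2 : max u v ∈ Set.Icc v (v + δ) :=
      ⟨le_max_right _ _, max_le (by linarith) (by linarith)⟩
    exact hne ((hcu t ⟨hut, htu⟩ _ hmem1).trans (hcv _ hmem2 (t + δ) ⟨hvt, htv⟩))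
  have hvu2 : v ≤ u + δ + δ := by linarith
  have dich : ∀ s, u + δ < s → s < v →
      (∀ x ∈ Set.Icc (u + δ) s, b x = b t) ∨ (∀ x ∈ Set.Icc s v, b x = b (t + δ)) := by
    intro s hs1 hs2
    obtain ⟨w, hw0, ⟨hws, hsw⟩, hcw⟩ := hB s (by linarith)
    rcases le_or_gt w (u + δ) with h | h
    · left
      intro x hx
      have h1x : x ∈ Set.Icc w (w + δ) := ⟨by linarith [hx.1], by linarith [hx.2]⟩
      have h2x : u + δ ∈ Set.Icc w (w + δ) := ⟨h, by linarith⟩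
      have hxx : b x = b (u + δ) := hcw x h1x _ h2x
      rw [hxx]
      exact hcu (u + δ) ⟨by linarith, le_refl _⟩ t ⟨hut, htu⟩
    · right
      intro x hx
      have h1x : x ∈ Set.Icc w (w + δ) := ⟨by linarith [hx.1], by linarith [hx.2]⟩
      have h2x : v ∈ Set.Icc w (w + δ) := ⟨by linarith, by linarith⟩
      have hxx : b x = b v := hcw x h1x v h2x
      rw [hxx]
      exact hcv v ⟨le_refl _, by linarith⟩ (t + δ) ⟨hvt, htv⟩
  set A : Set ℝ := {s | s ∈ Set.Icc (u + δ) v ∧ ∀ x ∈ Set.Icc (u + δ) s, b x = b t} with hA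
  have hAmem : (u + δ) ∈ A := by
    refine ⟨⟨le_refl _, le_of_lt huv⟩, ?_⟩
    intro x hx
    have hx' : x = u + δ := le_antisymm hx.2 hx.1
    rw [hx']
    exact hcu (u + δ) ⟨by linarith, le_refl _⟩ t ⟨hut, htu⟩
  have hAne : A.Nonempty := ⟨_, hAmem⟩
  have hAbdd : BddAbove A := ⟨v, fun s hs => hs.1.2⟩
  set T := sSup A with hT
  have hT1 : u + δ ≤ T := le_csSup hAbdd hAmem
  have hT2 : T ≤ v := csSup_le hAne (fun s hs => hs.1.2)
  have hleft : ∀ x ∈ Set.Ico u T, b x = b t := by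
    intro x hx
    rcases le_or_gt x (u + δ) with h | h
    · exact hcu x ⟨hx.1, h⟩ t ⟨hut, htu⟩
    · obtain ⟨s, hsA, hxs⟩ := exists_lt_of_lt_csSup hAne hx.2
      exact hsA.2 x ⟨le_of_lt h, le_of_lt hxs⟩
  have hright : ∀ x ∈ Set.Ioc T (v + δ), b x = b (t + δ) := by
    intro x hx
    rcases le_or_gt v x with h | h
    · exact hcv x ⟨h, hx.2⟩ (t + δ) ⟨hvt, htv⟩
    · have hx1 : u + δ < x := lt_of_le_of_lt hT1 hx.1
      rcases dich x hx1 h with hc | hc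
      · exact absurd (le_csSup hAbdd ⟨⟨le_of_lt hx1, le_of_lt h⟩, hc⟩) (not_le.mpr hx.1)
      · exact hc x ⟨le_refl _, le_of_lt h⟩
  have huT : u < T := by linarith
  have hTv : T < v + δ := by linarith
  refine ⟨T, ⟨by linarith, by linarith⟩, ?_, ?_, ?_⟩
  · intro ε hε
    have hmx : max u (T - ε) < T := max_lt huT (by linarith)
    set x := (max u (T - ε) + T) / 2 with hx
    set y := (T + min (v + δ) (T + ε)) / 2 with hy
    have hxu : u < x := by
      have := le_max_left u (T - ε); simp only [hx]; linarith
    have hxε : T - ε < x := by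
      have := le_max_right u (T - ε); simp only [hx]; linarith
    have hxT : x < T := by simp only [hx]; linarith
    have hmy : T < min (v + δ) (T + ε) := lt_min hTv (by linarith)
    have hyT : T < y := by simp only [hy]; linarith
    have hyv : y < v + δ := by
      have := min_le_left (v + δ) (T + ε); simp only [hy]; linarith
    have hyε : y < T + ε := by
      have := min_le_right (v + δ) (T + ε); simp only [hy]; linarith
    refine ⟨x, ⟨hxε, by linarith⟩, y, ⟨by linarith, hyε⟩, by linarith, by linarith, ?_⟩
    rw [hleft x ⟨le_of_lt hxu, hxT⟩, hright y ⟨hyT, le_of_lt hyv⟩]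
    exact hne
  · refine ⟨T - u, by linarith, fun x hx => ?_⟩
    have h1x : u < x := by have := hx.1; linarith
    rw [hleft x ⟨le_of_lt h1x, hx.2⟩]
    exact h1
  · right
    refine ⟨v + δ - T, by linarith, fun x hx => ?_⟩
    have h2x : x < v + δ := by have := hx.2; linarith
    rw [hright x ⟨hx.1, le_of_lt h2x⟩]
    exact h2
end

section
/- Over discrete time ℕ, for mutually exclusive predicates β₁, β₂ and any behavior b and instant t: the under-approximation of ¬becomes, namely DiamondPast_{[0,1]}(¬β₁) ∨ ¬β₂(b(t)), is equivalent to ¬(BoxPast_{[0,1]}(β₁) ∧ β₂(b(t))); moreover this formula is strictly weaker than the negation of the under-approximation of becomes (which is ¬(DiamondPast_{[0,1]}(β₁) ∧ Diamond_{[0,1]}(β₂))): there exists a discrete behavior and instant where both the under-approximation of becomes and the under-approximation of ¬becomes hold simultaneously. -/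
/-- `DiamondPast_{[0,1]}(β)` at `t` over discrete time. -/
def DiamondPast01 {S : Type*} (b : ℕ → S) (β : S → Prop) (t : ℕ) : Prop :=
  β (b t) ∨ (1 ≤ t ∧ β (b (t - 1)))

/-- `BoxPast_{[0,1]}(β)` at `t` over discrete time. -/
def BoxPast01 {S : Type*} (b : ℕ → S) (β : S → Prop) (t : ℕ) : Prop :=
  β (b t) ∧ (1 ≤ t → β (b (t - 1)))

/-- `Diamond_{[0,1]}(β)` at `t` over discrete time. -/
def Diamond01 {S : Type*} (b : ℕ → S) (β : S → Prop) (t : ℕ) : Prop :=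
  β (b t) ∨ β (b (t + 1))

/-- Over discrete time, for mutually exclusive `β₁, β₂` (both satisfiable):
(1) the under-approximation of `¬becomes`, namely
`DiamondPast_{[0,1]}(¬β₁) ∨ ¬β₂(b(t))`, is equivalent to
`¬(BoxPast_{[0,1]}(β₁) ∧ β₂(b(t)))`; and
(2) it is strictly weaker than the negation of the under-approximation of `becomes`:
there exist a discrete behavior and an instant at which both the under-approximation of
`becomes` (`DiamondPast_{[0,1]}(β₁) ∧ Diamond_{[0,1]}(β₂)`) and the under-approximation
of `¬becomes` hold simultaneously. -/
theorem underap_neg_becomes {S : Type*} [Finite S] (β₁ β₂ : S → Prop)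
    (hexcl : ∀ s : S, ¬ (β₁ s ∧ β₂ s)) (h1 : ∃ s : S, β₁ s) (h2 : ∃ s : S, β₂ s) :
    (∀ (b : ℕ → S) (t : ℕ),
      (DiamondPast01 b (fun s => ¬ β₁ s) t ∨ ¬ β₂ (b t)) ↔
        ¬ (BoxPast01 b β₁ t ∧ β₂ (b t))) ∧
    (∃ (b : ℕ → S) (t : ℕ),
      (DiamondPast01 b β₁ t ∧ Diamond01 b β₂ t) ∧
      (DiamondPast01 b (fun s => ¬ β₁ s) t ∨ ¬ β₂ (b t))) := by
  obtain ⟨s1, hs1⟩ := h1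
  obtain ⟨s2, hs2⟩ := h2
  constructor
  · intro b t
    simp only [DiamondPast01, BoxPast01]
    by_cases ht : 1 ≤ t <;> tauto
  · refine ⟨fun n => if n = 0 then s1 else s2, 0, ⟨?_, ?_⟩, ?_⟩
    · simp [DiamondPast01, hs1]
    · simp [Diamond01, hs2]
    · right
      simp only [if_pos rfl]
      exact fun h => hexcl s1 ⟨hs1, h⟩
end

section
/- Over dense time ℝ≥0, for a non-Berkeley behavior b (for δ), mutually exclusive state predicates for item st with values s_i ≠ s_j, and a transition point t where becomes(st = s_i, st = s_j) holds: for any clock-reset predicate r, NowOnStrict(r) holds at t if and only if (st = s_j → r) holds at b(t + δ). (Here st = s_j does hold at t+δ by non-Berkeleyness, so this equals: r holds at t+δ.) -/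
/-- At a transition point `t` where `becomes(st = sᵢ, st = sⱼ)` holds (non-Berkeley product
behavior, `sᵢ ≠ sⱼ`), for any clock-reset component `r`: `NowOnStrict(r)` holds at `t` iff
`st = sⱼ → r` holds at `t + δ`. -/
theorem nowon_reset_iff_at_delta {St : Type*} [Finite St] {Γ : Type*} [Finite Γ]
    (b : ℝ → Γ) (st : Γ → St) (rst : Γ → Bool) (δ : ℝ) (hδ : 0 < δ)
    (hB : NonBerkeley b δ) (si sj : St) (hne : si ≠ sj) (t : ℝ) (ht : 0 ≤ t)
    (hbec : Becomes b (fun g => st g = si) (fun g => st g = sj) t) :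
    NowOnStrict b (fun g => rst g = true) t ↔
      (st (b (t + δ)) = sj → rst (b (t + δ)) = true) := by
  obtain ⟨⟨ε, hε, hup⟩, hdisj⟩ := hbec
  have key : ∃ η > (0 : ℝ), st (b (t + δ)) = sj ∧
      ∀ x ∈ Set.Ioo t (t + η), b x = b (t + δ) := by
    by_cases hj : st (b t) = sj
    · obtain ⟨u, hu0, htI, hc⟩ := hB t ht
      have hut : u = t := by
        by_contra h
        have hlt : u < t := lt_of_le_of_ne htI.1 h
        set y := (max u (t - ε) + t) / 2 with hy
        have hy1 : max u (t - ε) < y := by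
          have : max u (t - ε) < t := max_lt hlt (by linarith)
          simp only [hy]; linarith
        have hy2 : y < t := by
          have : max u (t - ε) < t := max_lt hlt (by linarith)
          simp only [hy]; linarith
        have hysi : st (b y) = si :=
          hup y ⟨lt_of_le_of_lt (le_max_right _ _) hy1, hy2⟩
        have hbyt : b y = b t :=
          hc y ⟨le_of_lt (lt_of_le_of_lt (le_max_left _ _) hy1), by linarith [htI.2]⟩
            t ⟨htI.1, htI.2⟩
        exact hne (by rw [← hysi, hbyt, hj])
      subst hut
      refine ⟨δ, hδ, ?_, ?_⟩
      · have : b (u + δ) = b u :=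
          hc (u + δ) ⟨by linarith, le_refl _⟩ u ⟨le_refl _, by linarith⟩
        rw [this]; exact hj
      · intro x hx
        exact hc x ⟨hx.1.le, hx.2.le⟩ (u + δ) ⟨by linarith, le_refl _⟩
    · have hon : NowOnStrict b (fun g => st g = sj) t := hdisj.resolve_left hj
      obtain ⟨ε₂, hε₂, hon⟩ := hon
      set η := min ε₂ δ with hηdef
      have hη : 0 < η := lt_min hε₂ hδ
      have hconst : ∀ x ∈ Set.Ioo t (t + η), b x = b (t + δ) := by
        rintro x ⟨hx1, hx2⟩
        have hxj : st (b x) = sj :=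
          hon x ⟨hx1, lt_of_lt_of_le hx2 (by simp [hηdef, min_le_left])⟩
        obtain ⟨u, hu0, hxI, hc⟩ := hB x (le_trans ht hx1.le)
        have hut : t < u := by
          by_contra h
          push_neg at h
          have hbt : b t = b x :=
            hc t ⟨h, by linarith [hxI.2, hx1]⟩ x ⟨hxI.1, hxI.2⟩
          exact hj (by rw [hbt]; exact hxj)
        have hxδ : x < t + δ :=
          lt_of_lt_of_le hx2 (by simp [hηdef, min_le_right])
        exact hc x ⟨hxI.1, hxI.2⟩ (t + δ)
          ⟨by linarith [hxI.1], by linarith⟩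
      have hx0 : t + η / 2 ∈ Set.Ioo t (t + η) := by constructor <;> linarith
      refine ⟨η, hη, ?_, hconst⟩
      rw [← hconst _ hx0]
      exact hon _ ⟨hx0.1, lt_of_lt_of_le hx0.2 (by simp [hηdef, min_le_left])⟩
  obtain ⟨η, hη, hstδ, hconst⟩ := key
  constructor
  · rintro ⟨ε₃, hε₃, hr⟩ _
    have hm : 0 < min ε₃ η := lt_min hε₃ hη
    set x := t + min ε₃ η / 2 with hx
    have hx1 : t < x := by simp only [hx]; linarith
    have hx2 : x < t + η := by
      have := min_le_right ε₃ η; simp only [hx]; linarith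
    have hx3 : x < t + ε₃ := by
      have := min_le_left ε₃ η; simp only [hx]; linarith
    rw [← hconst x ⟨hx1, hx2⟩]
    exact hr x ⟨hx1, hx3⟩
  · intro h
    refine ⟨η, hη, fun x hx => ?_⟩
    rw [hconst x hx]
    exact h hstδ
end

section
/- Over discrete time ℕ: if the simplified over-approximated transition axioms hold for a behavior b — in particular, whenever b(h-1) has st = s_i and b(h) has st = s_j (with s_i ≠ s_j and (s_i, s_j, Λ, ξ) a transition with some clock c ∈ Λ), then (BoxPast_{[0,1]}(¬r_c) ∧ Box_{[0,2]}(st = s_j → r_c)) ∨ (BoxPast_{[0,1]}(r_c) ∧ Box_{[0,2]}(st = s_j → ¬r_c)) holds at h — then no instant h ≥ 1 satisfies st(h-1) = s_i ∧ st(h) = s_j; i.e., 'case 2' same-step transitions are impossible, so all transitions take the form st(h) = s_i ∧ st(h+1) = s_j. -/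
/-- Over discrete time `ℕ`: if the simplified over-approximated transition axiom holds at
every `h ≥ 1` with `st(h-1) = sᵢ` and `st(h) = sⱼ`, namely
`(BoxPast_{[0,1]}(¬r_c) ∧ Box_{[0,2]}(st = sⱼ → r_c)) ∨
 (BoxPast_{[0,1]}(r_c) ∧ Box_{[0,2]}(st = sⱼ → ¬r_c))`,
then no instant `h ≥ 1` satisfies `st(h-1) = sᵢ ∧ st(h) = sⱼ`: 'case 2' same-step
transitions are impossible. -/
theorem no_same_step_transitions {S : Type*} [Finite S] (st : ℕ → S) (r : ℕ → Bool)
    (si sj : S) (hne : si ≠ sj)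
    (hax : ∀ h : ℕ, 1 ≤ h → st (h - 1) = si → st h = sj →
      (((r h = false ∧ (1 ≤ h → r (h - 1) = false)) ∧
          (∀ d : ℕ, d ≤ 2 → st (h + d) = sj → r (h + d) = true)) ∨
       ((r h = true ∧ (1 ≤ h → r (h - 1) = true)) ∧
          (∀ d : ℕ, d ≤ 2 → st (h + d) = sj → r (h + d) = false)))) :
    ∀ h : ℕ, 1 ≤ h → ¬ (st (h - 1) = si ∧ st h = sj) := by
  intro h h1 ⟨hi, hj⟩
  rcases hax h h1 hi hj with ⟨⟨hf, _⟩, hall⟩ | ⟨⟨ht, _⟩, hall⟩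
  · have := hall 0 (by norm_num) (by simpa using hj); simp_all
  · have := hall 0 (by norm_num) (by simpa using hj); simp_all
end
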